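/- On a quasi-Sasakian manifold the Levi-Civita connection satisfies g((∇_X φ)Y, Z) = dη(φY, X)η(Z) − dη(φZ, X)η(Y) and g(∇_X ξ, Y) = dη(X, Y) for all vector fields X, Y, Z; equivalently g((∇_X φ)Y, Z) = −η(Z)(∇_X η)(φY) + η(Y)(∇_X η)(φZ). -/

import Mathlib

noncomputable section

/-!
An abstract model of smooth geometry: `F` plays the role of the algebra of
smooth real-valued functions on a manifold `M`, `V` plays the role of the
`C^∞(M)`-module of smooth vector fields on `M` (with its Lie bracket), and
`D X f` represents the directional derivative of the function `f` along the
vector field `X`.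
-/
structure SmoothSetting (F V : Type*) [CommRing F] [Algebra ℝ F]
    [LieRing V] [Module F V] [Module ℝ V] [IsScalarTower ℝ F V] where
  D : V → F → F
  D_add : ∀ (X : V) (f g : F), D X (f + g) = D X f + D X g
  D_mul : ∀ (X : V) (f g : F), D X (f * g) = f * D X g + g * D X f
  D_addX : ∀ (X Y : V) (f : F), D (X + Y) f = D X f + D Y f
  D_smulX : ∀ (f : F) (X : V) (k : F), D (f • X) k = f * D X k
  D_bracket : ∀ (X Y : V) (f : F), D ⁅X, Y⁆ f = D X (D Y f) - D Y (D X f)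
  bracket_smul : ∀ (f : F) (X Y : V), ⁅X, f • Y⁆ = f • ⁅X, Y⁆ + D X f • Y

/-- An almost contact metric manifold, modelled abstractly: a quadruple
`(φ, ξ, η, g)` where `φ` is a `(1,1)`-tensor field, `ξ` a vector field, `η` a
one-form and `g` a Riemannian metric, satisfying `φ² = -Id + η ⊗ ξ`,
`η(ξ) = 1` and `g(φX, φY) = g(X,Y) - η(X)η(Y)`, together with the Levi-Civita
connection `nabla` of `g` (characterised by metricity and torsion-freeness). -/
structure ACMS (F V : Type*) [CommRing F] [PartialOrder F] [Algebra ℝ F]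
    [LieRing V] [Module F V] [Module ℝ V] [IsScalarTower ℝ F V]
    extends SmoothSetting F V where
  phi : V → V
  xi : V
  eta : V → F
  g : V → V → F
  phi_add : ∀ X Y : V, phi (X + Y) = phi X + phi Y
  phi_smul : ∀ (f : F) (X : V), phi (f • X) = f • phi X
  eta_add : ∀ X Y : V, eta (X + Y) = eta X + eta Y
  eta_smul : ∀ (f : F) (X : V), eta (f • X) = f * eta X
  g_addX : ∀ X Y Z : V, g (X + Y) Z = g X Z + g Y Z
  g_smulX : ∀ (f : F) (X Y : V), g (f • X) Y = f * g X Y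
  g_symm : ∀ X Y : V, g X Y = g Y X
  g_nondeg : ∀ X : V, (∀ Y : V, g X Y = 0) → X = 0
  g_pos : ∀ X : V, 0 ≤ g X X
  phi_phi : ∀ X : V, phi (phi X) = -X + eta X • xi
  eta_xi : eta xi = 1
  phi_xi : phi xi = 0
  eta_phi : ∀ X : V, eta (phi X) = 0
  g_phi_phi : ∀ X Y : V, g (phi X) (phi Y) = g X Y - eta X * eta Y
  nabla : V → V → V
  nabla_addX : ∀ X Y Z : V, nabla (X + Y) Z = nabla X Z + nabla Y Z
  nabla_smulX : ∀ (f : F) (X Y : V), nabla (f • X) Y = f • nabla X Y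
  nabla_addY : ∀ X Y Z : V, nabla X (Y + Z) = nabla X Y + nabla X Z
  nabla_leibniz : ∀ (X : V) (f : F) (Y : V),
    nabla X (f • Y) = D X f • Y + f • nabla X Y
  nabla_torsion_free : ∀ X Y : V, nabla X Y - nabla Y X = ⁅X, Y⁆
  nabla_metric : ∀ X Y Z : V,
    D X (g Y Z) = g (nabla X Y) Z + g Y (nabla X Z)

namespace ACMS

variable {F V : Type*} [CommRing F] [PartialOrder F] [Algebra ℝ F]
  [LieRing V] [Module F V] [Module ℝ V] [IsScalarTower ℝ F V]
variable (A : ACMS F V)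

/-- The fundamental form `Φ(X,Y) = g(X, φY)`. -/
def Phi (X Y : V) : F := A.g X (A.phi Y)

/-- The exterior derivative `dη`, via the coboundary formula
`2 dη(X,Y) = X η(Y) - Y η(X) - η([X,Y])`. -/
def dEta (X Y : V) : F :=
  ((1:ℝ)/2) • (A.D X (A.eta Y) - A.D Y (A.eta X) - A.eta ⁅X, Y⁆)

/-- The exterior derivative `dΦ`, via the coboundary formula. -/
def dPhi (X Y Z : V) : F :=
  ((1:ℝ)/3) • (A.D X (A.Phi Y Z) + A.D Y (A.Phi Z X) + A.D Z (A.Phi X Y)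
    - A.Phi ⁅X, Y⁆ Z - A.Phi ⁅Y, Z⁆ X - A.Phi ⁅Z, X⁆ Y)

/-- The Lie derivative `(L_ξ η)(X)`. -/
def lieEta (X : V) : F := A.D A.xi (A.eta X) - A.eta ⁅A.xi, X⁆

/-- The Lie derivative `(L_ξ g)(X,Y)`. -/
def lieG (X Y : V) : F :=
  A.D A.xi (A.g X Y) - A.g ⁅A.xi, X⁆ Y - A.g X ⁅A.xi, Y⁆

/-- The Lie derivative `(L_ξ Φ)(X,Y)`. -/
def liePhiForm (X Y : V) : F :=
  A.D A.xi (A.Phi X Y) - A.Phi ⁅A.xi, X⁆ Y - A.Phi X ⁅A.xi, Y⁆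

/-- The Lie derivative `(L_ξ φ)(X)`. -/
def liePhi (X : V) : V := ⁅A.xi, A.phi X⁆ - A.phi ⁅A.xi, X⁆

/-- The tensor field `h = (1/2) L_ξ φ`. -/
def h (X : V) : V := ((1:ℝ)/2) • A.liePhi X

/-- The Nijenhuis torsion `[φ,φ](X,Y)`. -/
def nijPhi (X Y : V) : V :=
  A.phi (A.phi ⁅X, Y⁆) + ⁅A.phi X, A.phi Y⁆
    - A.phi ⁅A.phi X, Y⁆ - A.phi ⁅X, A.phi Y⁆

/-- The tensor `N⁽¹⁾(X,Y) = [φ,φ](X,Y) + 2 dη(X,Y) ξ`. -/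
def N1 (X Y : V) : V := A.nijPhi X Y + (2 * A.dEta X Y) • A.xi

/-- The tensor `N⁽²⁾(X,Y) = (L_{φX} η)(Y) - (L_{φY} η)(X)`. -/
def N2 (X Y : V) : F :=
  (A.D (A.phi X) (A.eta Y) - A.eta ⁅A.phi X, Y⁆)
    - (A.D (A.phi Y) (A.eta X) - A.eta ⁅A.phi Y, X⁆)

/-- The covariant derivative `(∇_X φ)(Y)`. -/
def covPhi (X Y : V) : V := A.nabla X (A.phi Y) - A.phi (A.nabla X Y)

/-- The covariant derivative `(∇_X η)(Y)`. -/
def covEta (X Y : V) : F := A.D X (A.eta Y) - A.eta (A.nabla X Y)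

/-- `M` is `η`-normal: `N⁽¹⁾(X,Y) = 0` whenever `η(X) = η(Y) = 0`. -/
def EtaNormal : Prop := ∀ X Y : V, A.eta X = 0 → A.eta Y = 0 → A.N1 X Y = 0

/-- `M` is normal: `N⁽¹⁾ = 0` identically. -/
def Normal : Prop := ∀ X Y : V, A.N1 X Y = 0

/-- `M` is a CR-manifold: for all `X, Y` with `η(X) = η(Y) = 0` there is `Z`
with `η(Z) = 0` and `[X - iφX, Y - iφY] = Z - iφZ` (stated here via its real
and imaginary parts). -/
def IsCR : Prop := ∀ X Y : V, A.eta X = 0 → A.eta Y = 0 →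
  ∃ Z : V, A.eta Z = 0 ∧ ⁅X, Y⁆ - ⁅A.phi X, A.phi Y⁆ = Z ∧
    ⁅A.phi X, Y⁆ + ⁅X, A.phi Y⁆ = A.phi Z

/-- `Dc` is a linear connection on `M`. -/
def IsConnection (Dc : V → V → V) : Prop :=
  (∀ X Y Z : V, Dc (X + Y) Z = Dc X Z + Dc Y Z) ∧
  (∀ (f : F) (X Y : V), Dc (f • X) Y = f • Dc X Y) ∧
  (∀ X Y Z : V, Dc X (Y + Z) = Dc X Y + Dc X Z) ∧
  (∀ (X : V) (f : F) (Y : V), Dc X (f • Y) = A.D X f • Y + f • Dc X Y)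

/-- `Dc` is a parallelization: a linear connection making the whole almost
contact metric structure parallel, `∇̃φ = 0`, `∇̃ξ = 0`, `∇̃η = 0`, `∇̃g = 0`. -/
def IsParallelization (Dc : V → V → V) : Prop :=
  A.IsConnection Dc ∧
  (∀ X Y : V, Dc X (A.phi Y) = A.phi (Dc X Y)) ∧
  (∀ X : V, Dc X A.xi = 0) ∧
  (∀ X Y : V, A.D X (A.eta Y) = A.eta (Dc X Y)) ∧
  (∀ X Y Z : V, A.D X (A.g Y Z) = A.g (Dc X Y) Z + A.g Y (Dc X Z))

end ACMS

/-!
Everything rests on Blair's formula, valid on any almost contact metric manifold and obtained by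
expanding both sides with the Koszul formula:

    2 g((∇_X φ)Y, Z) = 3 dΦ(X, φY, φZ) - 3 dΦ(X, Y, Z) + g(N⁽¹⁾(Y, Z), φX)
                       + N⁽²⁾(Y, Z) η(X) + 2 dη(φY, X) η(Z) - 2 dη(φZ, X) η(Y).

On a quasi-Sasakian manifold `dΦ = 0` and `N⁽¹⁾ = 0`; since
`η(N⁽¹⁾(X, Y)) = η[φX, φY] + 2 dη(X, Y)`, normality also forces `dη(ξ, ·) = 0` and
`N⁽²⁾ = 0`, which gives the first identity.
Taking `Y = ξ` there gives `g(φ ∇_X ξ, Z) = dη(φZ, X)`; putting `Z = φY` and using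
`η(∇_X ξ) = 0` yields `g(∇_X ξ, Y) = dη(X, Y)`. Finally metricity gives
`(∇_X η)Y = g(∇_X ξ, Y) = dη(X, Y)`, which turns the first identity into the third.
-/

section RealAlgebra
variable {F : Type*} [Semiring F] [Algebra ℝ F]

lemma two_mul_half_smul (x : F) : (2:F) * (((1:ℝ)/2) • x) = x := by
  rw [Algebra.smul_def, ← map_ofNat (algebraMap ℝ F) 2, ← mul_assoc, ← map_mul]
  norm_num

lemma three_mul_third_smul (x : F) : (3:F) * (((1:ℝ)/3) • x) = x := by
  rw [Algebra.smul_def, ← map_ofNat (algebraMap ℝ F) 3, ← mul_assoc, ← map_mul]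
  norm_num

lemma isUnit_two_of_real_algebra : IsUnit (2:F) := by
  rw [← map_ofNat (algebraMap ℝ F) 2]
  exact (isUnit_iff_ne_zero.mpr two_ne_zero).map _

end RealAlgebra

namespace ACMS
variable {F V : Type*} [CommRing F] [PartialOrder F] [Algebra ℝ F]
  [LieRing V] [Module F V] [Module ℝ V] [IsScalarTower ℝ F V]
variable (A : ACMS F V)

attribute [simp] g_addX g_smulX phi_phi eta_xi phi_xi eta_phi

@[simp] lemma D_zero (X : V) : A.D X 0 = 0 := (AddMonoidHom.mk' (A.D X) (A.D_add X)).map_zero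
@[simp] lemma D_neg (X : V) (f : F) : A.D X (-f) = -A.D X f :=
  (AddMonoidHom.mk' (A.D X) (A.D_add X)).map_neg f
@[simp] lemma D_one (X : V) : A.D X 1 = 0 := by simpa using A.D_mul X 1 1
@[simp] lemma D_zeroX (f : F) : A.D 0 f = 0 := by simpa using A.D_smulX 0 0 f
@[simp] lemma D_negX (X : V) (f : F) : A.D (-X) f = -A.D X f := by
  simpa using A.D_smulX (-1) X f

@[simp] lemma eta_zero : A.eta 0 = 0 := (AddMonoidHom.mk' A.eta A.eta_add).map_zero
@[simp] lemma eta_neg (X : V) : A.eta (-X) = -A.eta X :=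
  (AddMonoidHom.mk' A.eta A.eta_add).map_neg X
@[simp] lemma eta_sub (X Y : V) : A.eta (X - Y) = A.eta X - A.eta Y :=
  (AddMonoidHom.mk' A.eta A.eta_add).map_sub X Y

@[simp] lemma phi_neg (X : V) : A.phi (-X) = -A.phi X :=
  (AddMonoidHom.mk' A.phi A.phi_add).map_neg X
@[simp] lemma phi_sub (X Y : V) : A.phi (X - Y) = A.phi X - A.phi Y :=
  (AddMonoidHom.mk' A.phi A.phi_add).map_sub X Y

@[simp] lemma g_zeroX (Y : V) : A.g 0 Y = 0 := by simpa using A.g_smulX 0 0 Y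
@[simp] lemma g_negX (X Y : V) : A.g (-X) Y = -A.g X Y := by simpa using A.g_smulX (-1) X Y
@[simp] lemma g_subX (X Y Z : V) : A.g (X - Y) Z = A.g X Z - A.g Y Z := by
  simp [sub_eq_add_neg]
@[simp] lemma g_addY (X Y Z : V) : A.g X (Y + Z) = A.g X Y + A.g X Z := by
  simp [A.g_symm X]
@[simp] lemma g_smulY (f : F) (X Y : V) : A.g X (f • Y) = f * A.g X Y := by
  simp [A.g_symm X]
@[simp] lemma g_zeroY (X : V) : A.g X 0 = 0 := by simp [A.g_symm X]
@[simp] lemma g_negY (X Y : V) : A.g X (-Y) = -A.g X Y := by simp [A.g_symm X]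

@[simp] lemma g_xi_right (X : V) : A.g X A.xi = A.eta X := by
  simpa [sub_eq_zero] using (A.g_phi_phi X A.xi).symm

@[simp] lemma g_xi_left (X : V) : A.g A.xi X = A.eta X := by rw [A.g_symm, g_xi_right]

lemma g_phi_skew (X Y : V) : A.g X (A.phi Y) = -A.g (A.phi X) Y := by
  simpa using (A.g_phi_phi X (A.phi Y)).symm

lemma bracket_smul_left (f : F) (X Y : V) :
    ⁅f • X, Y⁆ = f • ⁅X, Y⁆ - A.D Y f • X := by
  rw [← lie_skew, A.bracket_smul, neg_add, ← smul_neg, lie_skew, sub_eq_add_neg]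

@[simp] lemma nabla_zeroY (X : V) : A.nabla X 0 = 0 := by simpa using A.nabla_leibniz X 0 0

lemma two_mul_dEta (X Y : V) :
    2 * A.dEta X Y = A.D X (A.eta Y) - A.D Y (A.eta X) - A.eta ⁅X, Y⁆ :=
  two_mul_half_smul _

lemma three_mul_dPhi (X Y Z : V) :
    3 * A.dPhi X Y Z = A.D X (A.Phi Y Z) + A.D Y (A.Phi Z X) + A.D Z (A.Phi X Y)
      - A.Phi ⁅X, Y⁆ Z - A.Phi ⁅Y, Z⁆ X - A.Phi ⁅Z, X⁆ Y :=
  three_mul_third_smul _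

lemma koszul (X Y Z : V) :
    2 * A.g (A.nabla X Y) Z =
      A.D X (A.g Y Z) + A.D Y (A.g Z X) - A.D Z (A.g X Y)
        + A.g ⁅X, Y⁆ Z - A.g ⁅X, Z⁆ Y - A.g ⁅Y, Z⁆ X := by
  simp only [A.nabla_metric, ← A.nabla_torsion_free, g_subX]
  linear_combination -A.g_symm Y (A.nabla X Z) - A.g_symm Z (A.nabla Y X)
    + A.g_symm X (A.nabla Z Y)

lemma eta_N1 (X Y : V) : A.eta (A.N1 X Y) = A.eta ⁅A.phi X, A.phi Y⁆ + 2 * A.dEta X Y := by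
  simp only [N1, nijPhi, phi_phi, eta_add, eta_sub, eta_neg, eta_smul, eta_xi, eta_phi]
  ring

lemma two_mul_g_covPhi (X Y Z : V) :
    2 * A.g (A.covPhi X Y) Z = 3 * A.dPhi X (A.phi Y) (A.phi Z) - 3 * A.dPhi X Y Z
      + A.g (A.N1 Y Z) (A.phi X) + A.N2 Y Z * A.eta X
      + 2 * A.dEta (A.phi Y) X * A.eta Z - 2 * A.dEta (A.phi Z) X * A.eta Y := by
  have hcov :
      A.g (A.covPhi X Y) Z = A.g (A.nabla X (A.phi Y)) Z + A.g (A.nabla X Y) (A.phi Z) := by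
    rw [covPhi, g_subX, g_phi_skew]; ring
  rw [hcov, mul_add, koszul, koszul, three_mul_dPhi, three_mul_dPhi, two_mul_dEta, two_mul_dEta]
  simp only [Phi, N1, nijPhi, N2, phi_add, phi_sub, phi_neg, phi_smul, phi_phi, phi_xi, eta_phi,
    eta_neg, g_addX, g_addY, g_subX, g_negX, g_negY, g_smulX, g_smulY, g_xi_left, g_xi_right,
    g_zeroX, g_phi_skew, SmoothSetting.D_add, SmoothSetting.D_mul, D_neg, D_zero, smul_zero,
    -- orient each bracket one way, so that `ring` can cancel `⁅U, W⁆` against `-⁅W, U⁆`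
    ← lie_skew Z X, ← lie_skew (A.phi Z) X, ← lie_skew (A.phi Z) Y, ← lie_skew (A.phi Y) X]
  ring

lemma dEta_swap (X Y : V) : A.dEta Y X = -A.dEta X Y := by
  apply isUnit_two_of_real_algebra.mul_left_cancel
  rw [mul_neg, two_mul_dEta, two_mul_dEta, ← lie_skew, eta_neg]
  ring

@[simp] lemma dEta_zero_left (X : V) : A.dEta 0 X = 0 := by simp [dEta]

lemma dEta_phi_phi (X Y : V) :
    A.dEta (A.phi (A.phi Y)) X = A.dEta X Y + A.eta Y * A.dEta A.xi X := by
  apply isUnit_two_of_real_algebra.mul_left_cancel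
  rw [mul_add, mul_left_comm, two_mul_dEta, two_mul_dEta, two_mul_dEta, eta_phi, D_zero]
  simp only [phi_phi, eta_add, eta_neg, eta_sub, eta_smul, eta_xi, SmoothSetting.D_addX, D_negX,
    SmoothSetting.D_smulX, D_one, add_lie, neg_lie, A.bracket_smul_left, ← lie_skew Y X]
  ring

lemma N2_eq_eta_N1 (Y Z : V) :
    A.N2 Y Z = A.eta (A.N1 Y (A.phi Z)) - A.eta Z * (2 * A.dEta A.xi (A.phi Y)) := by
  rw [eta_N1, two_mul_dEta, two_mul_dEta]
  simp only [N2, phi_phi, eta_phi, eta_neg, eta_add, eta_smul, eta_xi, lie_add, lie_neg,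
    A.bracket_smul, D_zero, D_one, ← lie_skew (A.phi Y) Z, ← lie_skew (A.phi Z) Y,
    ← lie_skew A.xi (A.phi Y)]
  ring

lemma eta_nabla_xi (X : V) : A.eta (A.nabla X A.xi) = 0 := by
  apply isUnit_two_of_real_algebra.mul_left_cancel
  have h := A.nabla_metric X A.xi A.xi
  rw [g_xi_right, eta_xi, D_one, g_xi_right, g_xi_left] at h
  linear_combination -h

lemma covPhi_xi (X : V) : A.covPhi X A.xi = -A.phi (A.nabla X A.xi) := by
  simp [covPhi]

lemma covEta_eq_g_nabla_xi (X Y : V) : A.covEta X Y = A.g (A.nabla X A.xi) Y := by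
  have h := A.nabla_metric X Y A.xi
  rw [g_xi_right, g_xi_right] at h
  rw [covEta, h, A.g_symm]
  ring

variable {A}

lemma dEta_xi_left_of_normal (hN : A.Normal) (W : V) : A.dEta A.xi W = 0 := by
  apply isUnit_two_of_real_algebra.mul_left_cancel
  have h := A.eta_N1 A.xi W
  rw [hN, eta_zero, phi_xi, zero_lie, eta_zero, zero_add] at h
  rw [← h, mul_zero]

lemma N2_eq_zero_of_normal (hN : A.Normal) (Y Z : V) : A.N2 Y Z = 0 := by
  rw [N2_eq_eta_N1, hN, eta_zero, dEta_xi_left_of_normal hN]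
  ring

lemma g_covPhi_of_normal_of_closed (hN : A.Normal) (hclosed : ∀ X Y Z : V, A.dPhi X Y Z = 0)
    (X Y Z : V) :
    A.g (A.covPhi X Y) Z = A.dEta (A.phi Y) X * A.eta Z - A.dEta (A.phi Z) X * A.eta Y := by
  apply isUnit_two_of_real_algebra.mul_left_cancel
  rw [two_mul_g_covPhi, hclosed, hclosed, hN, g_zeroX, N2_eq_zero_of_normal hN]
  ring

lemma g_nabla_xi_of_normal_of_closed (hN : A.Normal) (hclosed : ∀ X Y Z : V, A.dPhi X Y Z = 0)
    (X Y : V) : A.g (A.nabla X A.xi) Y = A.dEta X Y := by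
  have hphi (Z : V) : A.g (A.phi (A.nabla X A.xi)) Z = A.dEta (A.phi Z) X := by
    simpa [covPhi_xi] using g_covPhi_of_normal_of_closed hN hclosed X A.xi Z
  have h := A.g_phi_phi (A.nabla X A.xi) Y
  rw [hphi, dEta_phi_phi, dEta_xi_left_of_normal hN, eta_nabla_xi] at h
  linear_combination -h

end ACMS

/-- On a quasi-Sasakian manifold (a normal almost contact metric
manifold with closed fundamental form) the Levi-Civita connection satisfies
`g((∇_X φ)Y, Z) = dη(φY, X) η(Z) - dη(φZ, X) η(Y)` and
`g(∇_X ξ, Y) = dη(X, Y)`; equivalently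
`g((∇_X φ)Y, Z) = -η(Z)(∇_X η)(φY) + η(Y)(∇_X η)(φZ)`. -/
theorem quasi_sasakian_covariant_derivative
    {F V : Type*} [CommRing F] [PartialOrder F] [Algebra ℝ F]
    [LieRing V] [Module F V] [Module ℝ V] [IsScalarTower ℝ F V]
    (A : ACMS F V) (hN : A.Normal)
    (hclosed : ∀ X Y Z : V, A.dPhi X Y Z = 0) :
    (∀ X Y Z : V, A.g (A.covPhi X Y) Z =
      A.dEta (A.phi Y) X * A.eta Z - A.dEta (A.phi Z) X * A.eta Y) ∧
    (∀ X Y : V, A.g (A.nabla X A.xi) Y = A.dEta X Y) ∧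
    (∀ X Y Z : V, A.g (A.covPhi X Y) Z =
      - A.eta Z * A.covEta X (A.phi Y) + A.eta Y * A.covEta X (A.phi Z)) := by
  have hcovPhi := ACMS.g_covPhi_of_normal_of_closed hN hclosed
  have hnabla_xi := ACMS.g_nabla_xi_of_normal_of_closed hN hclosed
  refine ⟨hcovPhi, hnabla_xi, fun X Y Z => ?_⟩
  rw [hcovPhi, A.covEta_eq_g_nabla_xi, A.covEta_eq_g_nabla_xi, hnabla_xi, hnabla_xi,
    A.dEta_swap X, A.dEta_swap X]
  ring
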